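/- arXiv:0810.4596 — 4 statements merged into one kernel-verified Lean document; each statement's English description precedes it below -/
import Mathlib

section
/- Let g = s ⋉ r and suppose X_i' = ι(X_i) f + P_i ∈ U(g) satisfy [X_i', ι(Y)] = 0 for all Y ∈ r, [X_i', ι(X_j)] = C_ij^k X_k', where f, P_i depend only on generators of r. Then for all i, j: [X_i', X_j'] = f · Σ_k C_ij^k X_k'. In particular, the X_i' satisfy the commutation relations of s up to the central factor f. -/
open UniversalEnvelopingAlgebra

/-- The virtual copy commutation relations: if `X'_i = ι(X_i)·f + P_i` commutes with `ι(Y)`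
for every `Y` in the radical `r`, transforms under the `ι(X_j)` like the generators of `s`,
and `f`, `P_i` depend only on the radical generators with `f` a Casimir element (central in
`U(g)`), then `⁅X'_i, X'_j⁆ = f · Σ_l C_ij^l X'_l`. -/
theorem virtual_copy_bracket
    (k : Type*) [Field k] (g : Type*) [LieRing g] [LieAlgebra k g]
    (n : ℕ) (X : Fin n → g) (Cstr : Fin n → Fin n → Fin n → k)
    (hstr : ∀ i j, ⁅X i, X j⁆ = ∑ l, Cstr i j l • X l)
    (r : LieIdeal k g)
    (f : UniversalEnvelopingAlgebra k g) (P : Fin n → UniversalEnvelopingAlgebra k g)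
    -- `f` and the `P_i` depend only on the generators of the radical
    (hf : f ∈ Algebra.adjoin k ((fun Y => (ι k Y : UniversalEnvelopingAlgebra k g)) '' r))
    (hP : ∀ i, P i ∈ Algebra.adjoin k
      ((fun Y => (ι k Y : UniversalEnvelopingAlgebra k g)) '' r))
    -- `f` is a Casimir element: it is central in `U(g)`
    (hfc : f ∈ Subalgebra.center k (UniversalEnvelopingAlgebra k g))
    -- the `X'_i` commute with the radical
    (hrad : ∀ i, ∀ Y ∈ r, ⁅(ι k (X i) : UniversalEnvelopingAlgebra k g) * f + P i, ι k Y⁆ = 0)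
    -- and transform like the generators of `s`
    (htrans : ∀ i j, ⁅(ι k (X i) : UniversalEnvelopingAlgebra k g) * f + P i, ι k (X j)⁆
      = ∑ l, Cstr i j l • ((ι k (X l) : UniversalEnvelopingAlgebra k g) * f + P l)) :
    ∀ i j, ⁅(ι k (X i) : UniversalEnvelopingAlgebra k g) * f + P i,
        (ι k (X j) : UniversalEnvelopingAlgebra k g) * f + P j⁆
      = f * ∑ l, Cstr i j l • ((ι k (X l) : UniversalEnvelopingAlgebra k g) * f + P l) := by
  intro i j
  have hcomm : ∀ z ∈ Algebra.adjoin k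
      ((fun Y => (ι k Y : UniversalEnvelopingAlgebra k g)) '' r),
      z * ((ι k (X i) : UniversalEnvelopingAlgebra k g) * f + P i)
        = ((ι k (X i) : UniversalEnvelopingAlgebra k g) * f + P i) * z := by
    intro z hz
    have hle : Algebra.adjoin k ((fun Y => (ι k Y : UniversalEnvelopingAlgebra k g)) '' r)
        ≤ Subalgebra.centralizer k
          {(ι k (X i) : UniversalEnvelopingAlgebra k g) * f + P i} := by
      apply Algebra.adjoin_le
      rintro _ ⟨Y, hY, rfl⟩
      simp only [SetLike.mem_coe, Subalgebra.mem_centralizer_iff]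
      rintro w rfl
      have := hrad i Y hY
      rw [Ring.lie_def, sub_eq_zero] at this
      exact this
    exact ((Subalgebra.mem_centralizer_iff (R := k)).mp (hle hz) _ rfl).symm
  have hfc' : f * ((ι k (X i) : UniversalEnvelopingAlgebra k g) * f + P i)
      = ((ι k (X i) : UniversalEnvelopingAlgebra k g) * f + P i) * f :=
    (Subalgebra.mem_center_iff.mp hfc _).symm
  have hPj : P j * ((ι k (X i) : UniversalEnvelopingAlgebra k g) * f + P i)
      = ((ι k (X i) : UniversalEnvelopingAlgebra k g) * f + P i) * P j :=
    hcomm (P j) (hP j)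
  have key : ⁅(ι k (X i) : UniversalEnvelopingAlgebra k g) * f + P i,
        (ι k (X j) : UniversalEnvelopingAlgebra k g) * f + P j⁆
      = ⁅(ι k (X i) : UniversalEnvelopingAlgebra k g) * f + P i, ι k (X j)⁆ * f := by
    simp only [Ring.lie_def]
    rw [mul_add, add_mul ((ι k (X j) : UniversalEnvelopingAlgebra k g) * f) (P j),
        hPj, mul_assoc (ι k (X j)) f, hfc']
    noncomm_ring
  rw [key, htrans i j, Finset.sum_mul, Finset.mul_sum]
  refine Finset.sum_congr rfl fun l _ => ?_
  rw [smul_mul_assoc, mul_smul_comm]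
  congr 1
  exact (Subalgebra.mem_center_iff.mp hfc _)
end

section
/- In the Hamilton algebra Ha(N) with basis {J_ij, G_k, F_k, R} (1 ≤ i < j ≤ N, 1 ≤ k ≤ N) and brackets [J_ij,J_kl] = δ_il J_jk + δ_jk J_il − δ_jl J_ik − δ_ik J_jl, [G_i,F_j] = δ_ij R, [J_ij,G_k] = −δ_ik G_j + δ_jk G_i, [J_ij,F_k] = −δ_ik F_j + δ_jk F_i, all other brackets zero, the elements J_ij' := J_ij R + G_i F_j − G_j F_i of the universal enveloping algebra satisfy [J_ij', G_k] = 0, [J_ij', F_k] = 0, and [J_ij', R] = 0 for all i, j, k. -/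
/-! Since `ι` is a Lie algebra morphism, it suffices to work in an arbitrary associative algebra
whose elements satisfy the defining relations. Expanding `⁅J'_ij, X⁆` by the Leibniz rule, the
term `⁅J_ij, X⁆ R` coming from the `so(N)`-action on `X = G_l` (resp. `F_l`) is cancelled by the
Heisenberg brackets `⁅F_j, G_l⁆ = -δ_jl R` (resp. `⁅G_i, F_l⁆ = δ_il R`), as `R` is central. -/

open UniversalEnvelopingAlgebra

/-- Kronecker delta with values in a field `k`. -/
def kdelta (k : Type*) [Field k] {N : ℕ} (a b : Fin N) : k := if a = b then 1 else 0

lemma kdelta_comm (k : Type*) [Field k] {N : ℕ} (a b : Fin N) :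
    kdelta k a b = kdelta k b a := by
  simp [kdelta, eq_comm]

lemma Ring.mul_lie {A : Type*} [Ring A] (a b c : A) : ⁅a * b, c⁆ = a * ⁅b, c⁆ + ⁅a, c⁆ * b := by
  simp only [Ring.lie_def]
  noncomm_ring

namespace HamiltonAlgebra

variable {k A : Type*} [Field k] [Ring A] [Algebra k A] {N : ℕ}
  {J : Fin N → Fin N → A} {G F : Fin N → A} {R : A}

variable (J G F R) in
def virtualCopy (i j : Fin N) : A := J i j * R + G i * F j - G j * F i

lemma virtualCopy_lie_G (hGF : ∀ i j, ⁅G i, F j⁆ = kdelta k i j • R)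
    (hJG : ∀ i j l, ⁅J i j, G l⁆ = -(kdelta k i l • G j) + kdelta k j l • G i)
    (hGG : ∀ i j, ⁅G i, G j⁆ = 0) (hGR : ∀ i, ⁅G i, R⁆ = 0) (i j l : Fin N) :
    ⁅virtualCopy J G F R i j, G l⁆ = 0 := by
  let _ := LieRing.ofAssociativeRing (A := A)
  have hFG (a b) : ⁅F a, G b⁆ = -(kdelta k a b • R) := by rw [← lie_skew, hGF, kdelta_comm]
  have hRG (a) : ⁅R, G a⁆ = 0 := by rw [← lie_skew, hGR, neg_zero]
  rw [virtualCopy, sub_lie, add_lie, Ring.mul_lie, Ring.mul_lie, Ring.mul_lie, hJG, hRG, hFG,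
    hFG, hGG, hGG]
  simp only [mul_zero, zero_mul, add_zero, add_mul, neg_mul, mul_neg, smul_mul_assoc,
    mul_smul_comm]
  abel

lemma virtualCopy_lie_F (hGF : ∀ i j, ⁅G i, F j⁆ = kdelta k i j • R)
    (hJF : ∀ i j l, ⁅J i j, F l⁆ = -(kdelta k i l • F j) + kdelta k j l • F i)
    (hFF : ∀ i j, ⁅F i, F j⁆ = 0) (hFR : ∀ i, ⁅F i, R⁆ = 0) (i j l : Fin N) :
    ⁅virtualCopy J G F R i j, F l⁆ = 0 := by
  let _ := LieRing.ofAssociativeRing (A := A)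
  have hRF (a) : R * F a = F a * R := by
    rw [← sub_eq_zero, ← Ring.lie_def, ← lie_skew, hFR, neg_zero]
  rw [virtualCopy, sub_lie, add_lie, Ring.mul_lie, Ring.mul_lie, Ring.mul_lie, hJF, ← lie_skew,
    hFR, hFF, hFF, hGF, hGF]
  simp only [neg_zero, mul_zero, zero_add, add_mul, neg_mul, smul_mul_assoc, hRF]
  abel

lemma virtualCopy_lie_R (hJR : ∀ i j, ⁅J i j, R⁆ = 0) (hGR : ∀ i, ⁅G i, R⁆ = 0)
    (hFR : ∀ i, ⁅F i, R⁆ = 0) (i j : Fin N) :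
    ⁅virtualCopy J G F R i j, R⁆ = 0 := by
  let _ := LieRing.ofAssociativeRing (A := A)
  simp only [virtualCopy, sub_lie, add_lie, Ring.mul_lie, hJR, hGR, hFR, lie_self, mul_zero,
    zero_mul, add_zero, sub_zero]

end HamiltonAlgebra

open HamiltonAlgebra in
theorem hamilton_virtual_copy_commutes_radical_general
    (k : Type*) [Field k] (g : Type*) [LieRing g] [LieAlgebra k g] (N : ℕ)
    (J : Fin N → Fin N → g) (G F : Fin N → g) (R : g)
    (hGF : ∀ i j, ⁅G i, F j⁆ = kdelta k i j • R)
    (hJG : ∀ i j l, ⁅J i j, G l⁆ = -(kdelta k i l • G j) + kdelta k j l • G i)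
    (hJF : ∀ i j l, ⁅J i j, F l⁆ = -(kdelta k i l • F j) + kdelta k j l • F i)
    (hGG : ∀ i j, ⁅G i, G j⁆ = 0) (hFF : ∀ i j, ⁅F i, F j⁆ = 0)
    (hJR : ∀ i j, ⁅J i j, R⁆ = 0) (hGR : ∀ i, ⁅G i, R⁆ = 0) (hFR : ∀ i, ⁅F i, R⁆ = 0) :
    ∀ i j l,
      (⁅(ι k (J i j) : UniversalEnvelopingAlgebra k g) * ι k R
          + ι k (G i) * ι k (F j) - ι k (G j) * ι k (F i), ι k (G l)⁆ = 0)
      ∧ (⁅(ι k (J i j) : UniversalEnvelopingAlgebra k g) * ι k R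
          + ι k (G i) * ι k (F j) - ι k (G j) * ι k (F i), ι k (F l)⁆ = 0)
      ∧ (⁅(ι k (J i j) : UniversalEnvelopingAlgebra k g) * ι k R
          + ι k (G i) * ι k (F j) - ι k (G j) * ι k (F i), ι k R⁆ = 0) := by
  have hι (x y : g) : ⁅ι k x, ι k y⁆ = ι k ⁅x, y⁆ :=
    let _ := LieRing.ofAssociativeRing (A := UniversalEnvelopingAlgebra k g)
    (LieHom.map_lie (ι k) x y).symm
  have hGF' (a b) : ⁅ι k (G a), ι k (F b)⁆ = kdelta k a b • ι k R := by rw [hι, hGF, map_smul]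
  have hJG' (a b c) : ⁅ι k (J a b), ι k (G c)⁆ =
      -(kdelta k a c • ι k (G b)) + kdelta k b c • ι k (G a) := by
    rw [hι, hJG, map_add, map_neg, map_smul, map_smul]
  have hJF' (a b c) : ⁅ι k (J a b), ι k (F c)⁆ =
      -(kdelta k a c • ι k (F b)) + kdelta k b c • ι k (F a) := by
    rw [hι, hJF, map_add, map_neg, map_smul, map_smul]
  have hGG' (a b) : ⁅ι k (G a), ι k (G b)⁆ = 0 := by rw [hι, hGG, map_zero]
  have hFF' (a b) : ⁅ι k (F a), ι k (F b)⁆ = 0 := by rw [hι, hFF, map_zero]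
  have hJR' (a b) : ⁅ι k (J a b), ι k R⁆ = 0 := by rw [hι, hJR, map_zero]
  have hGR' (a) : ⁅ι k (G a), ι k R⁆ = 0 := by rw [hι, hGR, map_zero]
  have hFR' (a) : ⁅ι k (F a), ι k R⁆ = 0 := by rw [hι, hFR, map_zero]
  exact fun i j l => ⟨virtualCopy_lie_G hGF' hJG' hGG' hGR' i j l,
    virtualCopy_lie_F hGF' hJF' hFF' hFR' i j l, virtualCopy_lie_R hJR' hGR' hFR' i j⟩

/-- In the Hamilton algebra `Ha(N) = so(N) ⋉ h_N`, the elements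
`J'_ij = J_ij R + G_i F_j − G_j F_i` of `U(Ha(N))` commute with all the generators
`G_k`, `F_k`, `R` of the Heisenberg radical. -/
theorem hamilton_virtual_copy_commutes_radical
    (k : Type*) [Field k] (g : Type*) [LieRing g] [LieAlgebra k g] (N : ℕ)
    (J : Fin N → Fin N → g) (G F : Fin N → g) (R : g)
    (hJJ : ∀ i j l m, ⁅J i j, J l m⁆ =
      kdelta k i m • J j l + kdelta k j l • J i m - kdelta k j m • J i l - kdelta k i l • J j m)
    (hGF : ∀ i j, ⁅G i, F j⁆ = kdelta k i j • R)
    (hJG : ∀ i j l, ⁅J i j, G l⁆ = -(kdelta k i l • G j) + kdelta k j l • G i)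
    (hJF : ∀ i j l, ⁅J i j, F l⁆ = -(kdelta k i l • F j) + kdelta k j l • F i)
    (hGG : ∀ i j, ⁅G i, G j⁆ = 0) (hFF : ∀ i j, ⁅F i, F j⁆ = 0)
    (hJR : ∀ i j, ⁅J i j, R⁆ = 0) (hGR : ∀ i, ⁅G i, R⁆ = 0) (hFR : ∀ i, ⁅F i, R⁆ = 0) :
    ∀ i j l,
      (⁅(ι k (J i j) : UniversalEnvelopingAlgebra k g) * ι k R
          + ι k (G i) * ι k (F j) - ι k (G j) * ι k (F i), ι k (G l)⁆ = 0)
      ∧ (⁅(ι k (J i j) : UniversalEnvelopingAlgebra k g) * ι k R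
          + ι k (G i) * ι k (F j) - ι k (G j) * ι k (F i), ι k (F l)⁆ = 0)
      ∧ (⁅(ι k (J i j) : UniversalEnvelopingAlgebra k g) * ι k R
          + ι k (G i) * ι k (F j) - ι k (G j) * ι k (F i), ι k R⁆ = 0) :=
  hamilton_virtual_copy_commutes_radical_general k g N J G F R hGF hJG hJF hGG hFF hJR hGR hFR
end

section
/- In the quantum Hamilton algebra QHa(N), the element f := T² + RL − AM of U(QHa(N)) is a central element (a Casimir operator) of U(QHa(N)). -/
/-! Bracketing with a fixed element is a derivation of `U(g)`, so `f = T² + RL − AM` commutes with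
every generator that commutes with `T` and `R` (`L`, `A`, `M` being central). Among the basis
elements only `E` does not, and for it `[E, T²] = −2TL` and `[E, RL] = 2TL` cancel. Since the basis
generates `U(g)` as an algebra, `f` is central. -/

open UniversalEnvelopingAlgebra

theorem commute_sq_add_mul_sub_mul_of_lie {A : Type*} [Ring A] {e t r l a m : A}
    (het : ⁅e, t⁆ = -l) (her : ⁅e, r⁆ = 2 • t) (hel : Commute e l) (hea : Commute e a)
    (hem : Commute e m) (htl : Commute t l) : Commute e (t ^ 2 + r * l - a * m) := by
  have leibniz : ⁅e, t ^ 2 + r * l - a * m⁆ =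
      ⁅e, t⁆ * t + t * ⁅e, t⁆ + ⁅e, r⁆ * l + r * ⁅e, l⁆ - ⁅e, a⁆ * m - a * ⁅e, m⁆ := by
    simp only [Ring.lie_def]; noncomm_ring
  rw [commute_iff_lie_eq, leibniz, het, her, hel.lie_eq, hea.lie_eq, hem.lie_eq, neg_mul,
    mul_neg, smul_mul_assoc, htl.eq]
  noncomm_ring

attribute [local instance 100] LieRing.ofAssociativeRing

namespace UniversalEnvelopingAlgebra

variable (R : Type*) [CommRing R] {L : Type*} [LieRing L] [LieAlgebra R L]

theorem commute_ι_of_lie_eq_zero {x y : L} (h : ⁅x, y⁆ = 0) : Commute (ι R x) (ι R y) := by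
  rw [commute_iff_lie_eq, ← LieHom.map_lie, h, map_zero]

theorem adjoin_range_ι :
    Algebra.adjoin R (Set.range (ι R : L → UniversalEnvelopingAlgebra R L)) = ⊤ := by
  have : (ι R : L → UniversalEnvelopingAlgebra R L) = mkAlgHom R L ∘ TensorAlgebra.ι R := by
    ext x; simp [ι_apply]
  rw [this, Set.range_comp, ← AlgHom.map_adjoin, TensorAlgebra.adjoin_range_ι, Algebra.map_top,
    AlgHom.range_eq_top]
  exact RingCon.mkₐ_surjective (ringCon R L)

variable {R}

theorem mem_center_of_forall_commute_ι {S : Set L} (hS : Submodule.span R S = ⊤)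
    {a : UniversalEnvelopingAlgebra R L} (h : ∀ x ∈ S, Commute (ι R x) a) :
    a ∈ Subalgebra.center R (UniversalEnvelopingAlgebra R L) := by
  have hS_le : S ⊆ (Subalgebra.centralizer R {a}).toSubmodule.comap (ι R).toLinearMap := by
    intro x hx
    rw [SetLike.mem_coe, Submodule.mem_comap, LieHom.coe_toLinearMap, Subalgebra.mem_toSubmodule,
      Subalgebra.mem_centralizer_iff]
    rintro _ rfl
    exact (h x hx).eq.symm
  have hι : ∀ x, ι R x ∈ Subalgebra.centralizer R {a} := fun x =>
    Submodule.span_le.mpr hS_le (hS ▸ Submodule.mem_top)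
  have htop : Subalgebra.centralizer R {a} = ⊤ := by
    rw [eq_top_iff, ← adjoin_range_ι R]
    exact Algebra.adjoin_le (Set.range_subset_iff.mpr hι)
  rw [Subalgebra.mem_center_iff]
  intro b
  have hb : b ∈ Subalgebra.centralizer R {a} := htop ▸ Algebra.mem_top
  exact ((Subalgebra.mem_centralizer_iff R).mp hb a rfl).symm

end UniversalEnvelopingAlgebra

theorem QHa_casimir_central_general
    (k : Type*) [Field k] (g : Type*) [LieRing g] [LieAlgebra k g] (N : ℕ)
    (J : Fin N → Fin N → g) (G F Q P : Fin N → g) (R E T L A M : g)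
    (hET : ⁅E, T⁆ = -L) (hER : ⁅E, R⁆ = (2 : k) • T)
    (hLc : ∀ x : g, ⁅x, L⁆ = 0) (hAc : ∀ x : g, ⁅x, A⁆ = 0) (hMc : ∀ x : g, ⁅x, M⁆ = 0)
    (hJR : ∀ i j, ⁅J i j, R⁆ = 0)
    (hJT : ∀ i j, ⁅J i j, T⁆ = 0)
    (hGR : ∀ i, ⁅G i, R⁆ = 0) (hFR : ∀ i, ⁅F i, R⁆ = 0)
    (hQR : ∀ i, ⁅Q i, R⁆ = 0) (hPR : ∀ i, ⁅P i, R⁆ = 0)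
    (hGT : ∀ i, ⁅G i, T⁆ = 0) (hFT : ∀ i, ⁅F i, T⁆ = 0)
    (hQT : ∀ i, ⁅Q i, T⁆ = 0) (hPT : ∀ i, ⁅P i, T⁆ = 0)
    (hRT : ⁅R, T⁆ = 0)
    (hspan : Submodule.span k
      (Set.range (fun p : Fin N × Fin N => J p.1 p.2) ∪ Set.range G ∪ Set.range F
        ∪ Set.range Q ∪ Set.range P ∪ {R, E, T, L, A, M}) = ⊤) :
    (ι k T : UniversalEnvelopingAlgebra k g) ^ 2 + ι k R * ι k L - ι k A * ι k M
      ∈ Subalgebra.center k (UniversalEnvelopingAlgebra k g) := by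
  have commute_of_lie_T_R : ∀ x : g, ⁅x, T⁆ = 0 → ⁅x, R⁆ = 0 → Commute (ι k x)
      ((ι k T : UniversalEnvelopingAlgebra k g) ^ 2 + ι k R * ι k L - ι k A * ι k M) :=
    fun x hT hR =>
      have c {y : g} (h : ⁅x, y⁆ = 0) := commute_ι_of_lie_eq_zero k h
      ((c hT).pow_right 2 |>.add_right ((c hR).mul_right (c (hLc x)))).sub_right
        ((c (hAc x)).mul_right (c (hMc x)))
  have lie_eq_zero_of_central : ∀ {x : g}, (∀ y : g, ⁅y, x⁆ = 0) → ∀ y : g, ⁅x, y⁆ = 0 :=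
    fun hx y => by rw [← lie_skew, hx, neg_zero]
  refine mem_center_of_forall_commute_ι hspan ?_
  simp only [Set.mem_union, Set.mem_range, Set.mem_insert_iff, Set.mem_singleton_iff,
    Prod.exists]
  rintro x (((((⟨i, j, rfl⟩ | ⟨i, rfl⟩) | ⟨i, rfl⟩) | ⟨i, rfl⟩) | ⟨i, rfl⟩) |
    (rfl | rfl | rfl | rfl | rfl | rfl))
  · exact commute_of_lie_T_R _ (hJT i j) (hJR i j)
  · exact commute_of_lie_T_R _ (hGT i) (hGR i)
  · exact commute_of_lie_T_R _ (hFT i) (hFR i)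
  · exact commute_of_lie_T_R _ (hQT i) (hQR i)
  · exact commute_of_lie_T_R _ (hPT i) (hPR i)
  · exact commute_of_lie_T_R _ hRT (lie_self _)
  · refine commute_sq_add_mul_sub_mul_of_lie ?_ ?_ (commute_ι_of_lie_eq_zero k (hLc _))
      (commute_ι_of_lie_eq_zero k (hAc _)) (commute_ι_of_lie_eq_zero k (hMc _))
      (commute_ι_of_lie_eq_zero k (hLc T))
    · rw [← LieHom.map_lie, hET, map_neg]
    · rw [← LieHom.map_lie, hER, map_smul, two_smul, two_nsmul]
  · exact commute_of_lie_T_R _ (lie_self _) (by rw [← lie_skew, hRT, neg_zero])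
  · exact commute_of_lie_T_R _ (lie_eq_zero_of_central hLc T) (lie_eq_zero_of_central hLc R)
  · exact commute_of_lie_T_R _ (lie_eq_zero_of_central hAc T) (lie_eq_zero_of_central hAc R)
  · exact commute_of_lie_T_R _ (lie_eq_zero_of_central hMc T) (lie_eq_zero_of_central hMc R)

/-- In the quantum Hamilton algebra `QHa(N)`, the element `T² + RL − AM` of `U(QHa(N))`
is a central element (a Casimir operator). -/
theorem QHa_casimir_central
    (k : Type*) [Field k] (g : Type*) [LieRing g] [LieAlgebra k g] (N : ℕ)
    (J : Fin N → Fin N → g) (G F Q P : Fin N → g) (R E T L A M : g)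
    (hJa : ∀ i j, J i j = -J j i)
    (hJJ : ∀ i j l m, ⁅J i j, J l m⁆ =
      kdelta k i m • J j l + kdelta k j l • J i m - kdelta k j m • J i l - kdelta k i l • J j m)
    (hJG : ∀ i j l, ⁅J i j, G l⁆ = -(kdelta k i l • G j) + kdelta k j l • G i)
    (hJF : ∀ i j l, ⁅J i j, F l⁆ = -(kdelta k i l • F j) + kdelta k j l • F i)
    (hJQ : ∀ i j l, ⁅J i j, Q l⁆ = -(kdelta k i l • Q j) + kdelta k j l • Q i)
    (hJP : ∀ i j l, ⁅J i j, P l⁆ = -(kdelta k i l • P j) + kdelta k j l • P i)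
    (hGF : ∀ i j, ⁅G i, F j⁆ = kdelta k i j • R)
    (hGQ : ∀ i j, ⁅G i, Q j⁆ = kdelta k i j • T)
    (hFP : ∀ i j, ⁅F i, P j⁆ = kdelta k i j • T)
    (hPQ : ∀ i j, ⁅P i, Q j⁆ = kdelta k i j • L)
    (hGP : ∀ i j, ⁅G i, P j⁆ = kdelta k i j • M)
    (hFQ : ∀ i j, ⁅F i, Q j⁆ = kdelta k i j • A)
    (hEG : ∀ i, ⁅E, G i⁆ = -P i) (hEF : ∀ i, ⁅E, F i⁆ = Q i)
    (hET : ⁅E, T⁆ = -L) (hER : ⁅E, R⁆ = (2 : k) • T)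
    (hLc : ∀ x : g, ⁅x, L⁆ = 0) (hAc : ∀ x : g, ⁅x, A⁆ = 0) (hMc : ∀ x : g, ⁅x, M⁆ = 0)
    (hGG : ∀ i j, ⁅G i, G j⁆ = 0) (hFF : ∀ i j, ⁅F i, F j⁆ = 0)
    (hQQ : ∀ i j, ⁅Q i, Q j⁆ = 0) (hPP : ∀ i j, ⁅P i, P j⁆ = 0)
    (hJR : ∀ i j, ⁅J i j, R⁆ = 0) (hJE : ∀ i j, ⁅J i j, E⁆ = 0)
    (hJT : ∀ i j, ⁅J i j, T⁆ = 0)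
    (hGR : ∀ i, ⁅G i, R⁆ = 0) (hFR : ∀ i, ⁅F i, R⁆ = 0)
    (hQR : ∀ i, ⁅Q i, R⁆ = 0) (hPR : ∀ i, ⁅P i, R⁆ = 0)
    (hGT : ∀ i, ⁅G i, T⁆ = 0) (hFT : ∀ i, ⁅F i, T⁆ = 0)
    (hQT : ∀ i, ⁅Q i, T⁆ = 0) (hPT : ∀ i, ⁅P i, T⁆ = 0)
    (hRT : ⁅R, T⁆ = 0)
    (hEQ : ∀ i, ⁅E, Q i⁆ = 0) (hEP : ∀ i, ⁅E, P i⁆ = 0)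
    (hspan : Submodule.span k
      (Set.range (fun p : Fin N × Fin N => J p.1 p.2) ∪ Set.range G ∪ Set.range F
        ∪ Set.range Q ∪ Set.range P ∪ {R, E, T, L, A, M}) = ⊤) :
    (ι k T : UniversalEnvelopingAlgebra k g) ^ 2 + ι k R * ι k L - ι k A * ι k M
      ∈ Subalgebra.center k (UniversalEnvelopingAlgebra k g) :=
  QHa_casimir_central_general k g N J G F Q P R E T L A M hET hER hLc hAc hMc hJR hJT hGR hFR hQR
    hPR hGT hFT hQT hPT hRT hspan
end

section
/- In the quantum Hamilton algebra QHa(N), the elements Ĵ_ij (defined as J_ij(T²+RL−AM) + T(G_iQ_j−G_jQ_i) + T(F_iP_j−F_jP_i) + L(G_iF_j−G_jF_i) + R(P_iQ_j−P_jQ_i) + M(Q_iF_j−Q_jF_i) + A(P_iG_j−P_jG_i)) satisfy [Ĵ_ij, J_kl] = δ_il Ĵ_jk + δ_jk Ĵ_il − δ_jl Ĵ_ik − δ_ik Ĵ_jl, i.e. they transform like the so(N) generators. -/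
open UniversalEnvelopingAlgebra

section LieAlgebra

variable (k : Type*) [Field k] {L : Type*} [LieRing L] [LieAlgebra k L] {N : ℕ}

def IsSoVector (J : Fin N → Fin N → L) (V : Fin N → L) : Prop :=
  ∀ i j l, ⁅J i j, V l⁆ = -(kdelta k i l • V j) + kdelta k j l • V i

def soTensors (J : Fin N → Fin N → L) : Submodule k (Fin N → Fin N → L) where
  carrier := {X | ∀ i j l m, ⁅X i j, J l m⁆ =
    kdelta k i m • X j l + kdelta k j l • X i m - kdelta k j m • X i l - kdelta k i l • X j m}
  zero_mem' := by intro i j l m; simp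
  add_mem' {X Y} hX hY i j l m := by
    simp only [Pi.add_apply, add_lie, hX i j l m, hY i j l m, smul_add]
    abel
  smul_mem' c X hX i j l m := by
    simp only [Pi.smul_apply, smul_lie, hX i j l m, smul_add, smul_sub, smul_comm c]

variable {k}

lemma IsSoVector.lie_left {J : Fin N → Fin N → L} {V : Fin N → L} (hV : IsSoVector k J V)
    (a l m : Fin N) : ⁅V a, J l m⁆ = kdelta k a l • V m - kdelta k a m • V l := by
  rw [← lie_skew, hV, kdelta_comm k l a, kdelta_comm k m a]
  abel

variable {L' : Type*} [LieRing L'] [LieAlgebra k L']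

lemma IsSoVector.map {J : Fin N → Fin N → L} {V : Fin N → L} (hV : IsSoVector k J V)
    (f : L →ₗ⁅k⁆ L') : IsSoVector k (fun a b => f (J a b)) (fun a => f (V a)) := by
  intro i j l
  simp only [← LieHom.map_lie, hV i j l, map_add, map_neg, map_smul]

lemma map_mem_soTensors {J X : Fin N → Fin N → L} (hX : X ∈ soTensors k J) (f : L →ₗ⁅k⁆ L') :
    (fun a b => f (X a b)) ∈ soTensors k (fun a b => f (J a b)) := by
  intro i j l m
  simp only [← LieHom.map_lie, hX i j l m, map_add, map_sub, map_smul]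

end LieAlgebra

section Associative

attribute [local instance] LieRing.ofAssociativeRing

variable {k : Type*} [Field k] {A : Type*} [Ring A] [Algebra k A] {N : ℕ}

lemma mul_lie_eq (a b c : A) : ⁅a * b, c⁆ = a * ⁅b, c⁆ + ⁅a, c⁆ * b := by
  simp only [Ring.lie_def]
  noncomm_ring

lemma wedge_mem_soTensors {J : Fin N → Fin N → A} {V W : Fin N → A}
    (hV : IsSoVector k J V) (hW : IsSoVector k J W) :
    (fun a b => V a * W b - V b * W a) ∈ soTensors k J := by
  intro i j l m
  simp only [sub_lie, mul_lie_eq, hV.lie_left, hW.lie_left, mul_sub, sub_mul, mul_smul_comm,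
    smul_mul_assoc, smul_sub]
  abel

lemma mul_left_mem_soTensors {J X : Fin N → Fin N → A} {Z : A}
    (hZ : ∀ l m, Commute Z (J l m)) (hX : X ∈ soTensors k J) :
    (fun a b => Z * X a b) ∈ soTensors k J := by
  intro i j l m
  have hZJ : ⁅Z, J l m⁆ = 0 := commute_iff_lie_eq.mp (hZ l m)
  simp only [mul_lie_eq, hZJ, zero_mul, add_zero, hX i j l m, mul_add, mul_sub, mul_smul_comm]

lemma mul_right_mem_soTensors {J X : Fin N → Fin N → A} {Z : A}
    (hZ : ∀ l m, Commute Z (J l m)) (hX : X ∈ soTensors k J) :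
    (fun a b => X a b * Z) ∈ soTensors k J := by
  intro i j l m
  have hZJ : ⁅Z, J l m⁆ = 0 := commute_iff_lie_eq.mp (hZ l m)
  simp only [mul_lie_eq, hZJ, mul_zero, zero_add, hX i j l m, add_mul, sub_mul, smul_mul_assoc]

end Associative

theorem QHa_virtual_copy_transforms_like_soN_general
    (k : Type*) [Field k] (g : Type*) [LieRing g] [LieAlgebra k g] (N : ℕ)
    (J : Fin N → Fin N → g) (G F Q P : Fin N → g) (R T L A M : g)
    (hJJ : ∀ i j l m, ⁅J i j, J l m⁆ =
      kdelta k i m • J j l + kdelta k j l • J i m - kdelta k j m • J i l - kdelta k i l • J j m)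
    (hJG : ∀ i j l, ⁅J i j, G l⁆ = -(kdelta k i l • G j) + kdelta k j l • G i)
    (hJF : ∀ i j l, ⁅J i j, F l⁆ = -(kdelta k i l • F j) + kdelta k j l • F i)
    (hJQ : ∀ i j l, ⁅J i j, Q l⁆ = -(kdelta k i l • Q j) + kdelta k j l • Q i)
    (hJP : ∀ i j l, ⁅J i j, P l⁆ = -(kdelta k i l • P j) + kdelta k j l • P i)
    (hLc : ∀ x : g, ⁅x, L⁆ = 0) (hAc : ∀ x : g, ⁅x, A⁆ = 0) (hMc : ∀ x : g, ⁅x, M⁆ = 0)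
    (hJR : ∀ i j, ⁅J i j, R⁆ = 0)
    (hJT : ∀ i j, ⁅J i j, T⁆ = 0)
 :
    ∀ i j l m,
      ⁅(fun a b => (ι k (J a b) : UniversalEnvelopingAlgebra k g)
        * (ι k T ^ 2 + ι k R * ι k L - ι k A * ι k M)
      + ι k T * (ι k (G a) * ι k (Q b) - ι k (G b) * ι k (Q a))
      + ι k T * (ι k (F a) * ι k (P b) - ι k (F b) * ι k (P a))
      + ι k L * (ι k (G a) * ι k (F b) - ι k (G b) * ι k (F a))
      + ι k R * (ι k (P a) * ι k (Q b) - ι k (P b) * ι k (Q a))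
      + ι k M * (ι k (Q a) * ι k (F b) - ι k (Q b) * ι k (F a))
      + ι k A * (ι k (P a) * ι k (G b) - ι k (P b) * ι k (G a))) i j, ι k (J l m)⁆
        = kdelta k i m • ((fun a b => (ι k (J a b) : UniversalEnvelopingAlgebra k g)
        * (ι k T ^ 2 + ι k R * ι k L - ι k A * ι k M)
      + ι k T * (ι k (G a) * ι k (Q b) - ι k (G b) * ι k (Q a))
      + ι k T * (ι k (F a) * ι k (P b) - ι k (F b) * ι k (P a))
      + ι k L * (ι k (G a) * ι k (F b) - ι k (G b) * ι k (F a))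
      + ι k R * (ι k (P a) * ι k (Q b) - ι k (P b) * ι k (Q a))
      + ι k M * (ι k (Q a) * ι k (F b) - ι k (Q b) * ι k (F a))
      + ι k A * (ι k (P a) * ι k (G b) - ι k (P b) * ι k (G a))) j l)
          + kdelta k j l • ((fun a b => (ι k (J a b) : UniversalEnvelopingAlgebra k g)
        * (ι k T ^ 2 + ι k R * ι k L - ι k A * ι k M)
      + ι k T * (ι k (G a) * ι k (Q b) - ι k (G b) * ι k (Q a))
      + ι k T * (ι k (F a) * ι k (P b) - ι k (F b) * ι k (P a))
      + ι k L * (ι k (G a) * ι k (F b) - ι k (G b) * ι k (F a))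
      + ι k R * (ι k (P a) * ι k (Q b) - ι k (P b) * ι k (Q a))
      + ι k M * (ι k (Q a) * ι k (F b) - ι k (Q b) * ι k (F a))
      + ι k A * (ι k (P a) * ι k (G b) - ι k (P b) * ι k (G a))) i m)
          - kdelta k j m • ((fun a b => (ι k (J a b) : UniversalEnvelopingAlgebra k g)
        * (ι k T ^ 2 + ι k R * ι k L - ι k A * ι k M)
      + ι k T * (ι k (G a) * ι k (Q b) - ι k (G b) * ι k (Q a))
      + ι k T * (ι k (F a) * ι k (P b) - ι k (F b) * ι k (P a))
      + ι k L * (ι k (G a) * ι k (F b) - ι k (G b) * ι k (F a))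
      + ι k R * (ι k (P a) * ι k (Q b) - ι k (P b) * ι k (Q a))
      + ι k M * (ι k (Q a) * ι k (F b) - ι k (Q b) * ι k (F a))
      + ι k A * (ι k (P a) * ι k (G b) - ι k (P b) * ι k (G a))) i l)
          - kdelta k i l • ((fun a b => (ι k (J a b) : UniversalEnvelopingAlgebra k g)
        * (ι k T ^ 2 + ι k R * ι k L - ι k A * ι k M)
      + ι k T * (ι k (G a) * ι k (Q b) - ι k (G b) * ι k (Q a))
      + ι k T * (ι k (F a) * ι k (P b) - ι k (F b) * ι k (P a))
      + ι k L * (ι k (G a) * ι k (F b) - ι k (G b) * ι k (F a))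
      + ι k R * (ι k (P a) * ι k (Q b) - ι k (P b) * ι k (Q a))
      + ι k M * (ι k (Q a) * ι k (F b) - ι k (Q b) * ι k (F a))
      + ι k A * (ι k (P a) * ι k (G b) - ι k (P b) * ι k (G a))) j m) := by
  let _ : LieRing (UniversalEnvelopingAlgebra k g) := LieRing.ofAssociativeRing
  have hCommute (x : g) (hx : ∀ l m, ⁅J l m, x⁆ = 0) (l m : Fin N) :
      Commute (ι k x) (ι k (J l m)) := by
    rw [commute_iff_lie_eq, ← LieHom.map_lie, ← lie_skew, hx, neg_zero, map_zero]
  have hT := hCommute T hJT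
  have hR := hCommute R hJR
  have hL := hCommute L fun l m => hLc _
  have hA := hCommute A fun l m => hAc _
  have hM := hCommute M fun l m => hMc _
  have hInvariant (l m : Fin N) :
      Commute (ι k T ^ 2 + ι k R * ι k L - ι k A * ι k M) (ι k (J l m)) :=
    (((hT l m).pow_left 2).add_left ((hR l m).mul_left (hL l m))).sub_left
      ((hA l m).mul_left (hM l m))
  have hJ := map_mem_soTensors hJJ (ι k)
  have hG := IsSoVector.map hJG (ι k)
  have hF := IsSoVector.map hJF (ι k)
  have hQ := IsSoVector.map hJQ (ι k)
  have hP := IsSoVector.map hJP (ι k)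
  exact add_mem (add_mem (add_mem (add_mem (add_mem (add_mem
    (mul_right_mem_soTensors hInvariant hJ)
    (mul_left_mem_soTensors hT (wedge_mem_soTensors hG hQ)))
    (mul_left_mem_soTensors hT (wedge_mem_soTensors hF hP)))
    (mul_left_mem_soTensors hL (wedge_mem_soTensors hG hF)))
    (mul_left_mem_soTensors hR (wedge_mem_soTensors hP hQ)))
    (mul_left_mem_soTensors hM (wedge_mem_soTensors hQ hF)))
    (mul_left_mem_soTensors hA (wedge_mem_soTensors hP hG))

/-- In `QHa(N)`, the elements `Ĵ_ij` transform like the `so(N)` generators: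
`⁅Ĵ_ij, ι(J_kl)⁆ = δ_il Ĵ_jk + δ_jk Ĵ_il − δ_jl Ĵ_ik − δ_ik Ĵ_jl`. -/
theorem QHa_virtual_copy_transforms_like_soN
    (k : Type*) [Field k] (g : Type*) [LieRing g] [LieAlgebra k g] (N : ℕ)
    (J : Fin N → Fin N → g) (G F Q P : Fin N → g) (R E T L A M : g)
    (hJa : ∀ i j, J i j = -J j i)
    (hJJ : ∀ i j l m, ⁅J i j, J l m⁆ =
      kdelta k i m • J j l + kdelta k j l • J i m - kdelta k j m • J i l - kdelta k i l • J j m)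
    (hJG : ∀ i j l, ⁅J i j, G l⁆ = -(kdelta k i l • G j) + kdelta k j l • G i)
    (hJF : ∀ i j l, ⁅J i j, F l⁆ = -(kdelta k i l • F j) + kdelta k j l • F i)
    (hJQ : ∀ i j l, ⁅J i j, Q l⁆ = -(kdelta k i l • Q j) + kdelta k j l • Q i)
    (hJP : ∀ i j l, ⁅J i j, P l⁆ = -(kdelta k i l • P j) + kdelta k j l • P i)
    (hGF : ∀ i j, ⁅G i, F j⁆ = kdelta k i j • R)
    (hGQ : ∀ i j, ⁅G i, Q j⁆ = kdelta k i j • T)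
    (hFP : ∀ i j, ⁅F i, P j⁆ = kdelta k i j • T)
    (hPQ : ∀ i j, ⁅P i, Q j⁆ = kdelta k i j • L)
    (hGP : ∀ i j, ⁅G i, P j⁆ = kdelta k i j • M)
    (hFQ : ∀ i j, ⁅F i, Q j⁆ = kdelta k i j • A)
    (hEG : ∀ i, ⁅E, G i⁆ = -P i) (hEF : ∀ i, ⁅E, F i⁆ = Q i)
    (hET : ⁅E, T⁆ = -L) (hER : ⁅E, R⁆ = (2 : k) • T)
    (hLc : ∀ x : g, ⁅x, L⁆ = 0) (hAc : ∀ x : g, ⁅x, A⁆ = 0) (hMc : ∀ x : g, ⁅x, M⁆ = 0)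
    (hGG : ∀ i j, ⁅G i, G j⁆ = 0) (hFF : ∀ i j, ⁅F i, F j⁆ = 0)
    (hQQ : ∀ i j, ⁅Q i, Q j⁆ = 0) (hPP : ∀ i j, ⁅P i, P j⁆ = 0)
    (hJR : ∀ i j, ⁅J i j, R⁆ = 0) (hJE : ∀ i j, ⁅J i j, E⁆ = 0)
    (hJT : ∀ i j, ⁅J i j, T⁆ = 0)
    (hGR : ∀ i, ⁅G i, R⁆ = 0) (hFR : ∀ i, ⁅F i, R⁆ = 0)
    (hQR : ∀ i, ⁅Q i, R⁆ = 0) (hPR : ∀ i, ⁅P i, R⁆ = 0)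
    (hGT : ∀ i, ⁅G i, T⁆ = 0) (hFT : ∀ i, ⁅F i, T⁆ = 0)
    (hQT : ∀ i, ⁅Q i, T⁆ = 0) (hPT : ∀ i, ⁅P i, T⁆ = 0)
    (hRT : ⁅R, T⁆ = 0)
    (hEQ : ∀ i, ⁅E, Q i⁆ = 0) (hEP : ∀ i, ⁅E, P i⁆ = 0)
 :
    ∀ i j l m,
      ⁅(fun a b => (ι k (J a b) : UniversalEnvelopingAlgebra k g)
        * (ι k T ^ 2 + ι k R * ι k L - ι k A * ι k M)
      + ι k T * (ι k (G a) * ι k (Q b) - ι k (G b) * ι k (Q a))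
      + ι k T * (ι k (F a) * ι k (P b) - ι k (F b) * ι k (P a))
      + ι k L * (ι k (G a) * ι k (F b) - ι k (G b) * ι k (F a))
      + ι k R * (ι k (P a) * ι k (Q b) - ι k (P b) * ι k (Q a))
      + ι k M * (ι k (Q a) * ι k (F b) - ι k (Q b) * ι k (F a))
      + ι k A * (ι k (P a) * ι k (G b) - ι k (P b) * ι k (G a))) i j, ι k (J l m)⁆
        = kdelta k i m • ((fun a b => (ι k (J a b) : UniversalEnvelopingAlgebra k g)
        * (ι k T ^ 2 + ι k R * ι k L - ι k A * ι k M)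
      + ι k T * (ι k (G a) * ι k (Q b) - ι k (G b) * ι k (Q a))
      + ι k T * (ι k (F a) * ι k (P b) - ι k (F b) * ι k (P a))
      + ι k L * (ι k (G a) * ι k (F b) - ι k (G b) * ι k (F a))
      + ι k R * (ι k (P a) * ι k (Q b) - ι k (P b) * ι k (Q a))
      + ι k M * (ι k (Q a) * ι k (F b) - ι k (Q b) * ι k (F a))
      + ι k A * (ι k (P a) * ι k (G b) - ι k (P b) * ι k (G a))) j l)
          + kdelta k j l • ((fun a b => (ι k (J a b) : UniversalEnvelopingAlgebra k g)
        * (ι k T ^ 2 + ι k R * ι k L - ι k A * ι k M)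
      + ι k T * (ι k (G a) * ι k (Q b) - ι k (G b) * ι k (Q a))
      + ι k T * (ι k (F a) * ι k (P b) - ι k (F b) * ι k (P a))
      + ι k L * (ι k (G a) * ι k (F b) - ι k (G b) * ι k (F a))
      + ι k R * (ι k (P a) * ι k (Q b) - ι k (P b) * ι k (Q a))
      + ι k M * (ι k (Q a) * ι k (F b) - ι k (Q b) * ι k (F a))
      + ι k A * (ι k (P a) * ι k (G b) - ι k (P b) * ι k (G a))) i m)
          - kdelta k j m • ((fun a b => (ι k (J a b) : UniversalEnvelopingAlgebra k g)
        * (ι k T ^ 2 + ι k R * ι k L - ι k A * ι k M)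
      + ι k T * (ι k (G a) * ι k (Q b) - ι k (G b) * ι k (Q a))
      + ι k T * (ι k (F a) * ι k (P b) - ι k (F b) * ι k (P a))
      + ι k L * (ι k (G a) * ι k (F b) - ι k (G b) * ι k (F a))
      + ι k R * (ι k (P a) * ι k (Q b) - ι k (P b) * ι k (Q a))
      + ι k M * (ι k (Q a) * ι k (F b) - ι k (Q b) * ι k (F a))
      + ι k A * (ι k (P a) * ι k (G b) - ι k (P b) * ι k (G a))) i l)
          - kdelta k i l • ((fun a b => (ι k (J a b) : UniversalEnvelopingAlgebra k g)
        * (ι k T ^ 2 + ι k R * ι k L - ι k A * ι k M)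
      + ι k T * (ι k (G a) * ι k (Q b) - ι k (G b) * ι k (Q a))
      + ι k T * (ι k (F a) * ι k (P b) - ι k (F b) * ι k (P a))
      + ι k L * (ι k (G a) * ι k (F b) - ι k (G b) * ι k (F a))
      + ι k R * (ι k (P a) * ι k (Q b) - ι k (P b) * ι k (Q a))
      + ι k M * (ι k (Q a) * ι k (F b) - ι k (Q b) * ι k (F a))
      + ι k A * (ι k (P a) * ι k (G b) - ι k (P b) * ι k (G a))) j m) :=
  QHa_virtual_copy_transforms_like_soN_general k g N J G F Q P R T L A M hJJ hJG hJF hJQ hJP hLc hAc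
    hMc hJR hJT
end
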